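/- arXiv:2501.10897 — 2 statements merged into one kernel-verified Lean document; each statement's English description precedes it below -/
import Mathlib

section
/- Let A be an I × R real matrix and B a J × R real matrix. (a) If krank(A) = 0 or krank(B) = 0, then krank(A ⊙ B) = 0. (b) If krank(A) ≥ 1 and krank(B) ≥ 1, then krank(A ⊙ B) ≥ min(krank(A) + krank(B) − 1, R). -/
open Matrix MeasureTheory

namespace LBGM

/-- The set of latent variables connected to observed variable `j`. -/
def co {J K : ℕ} (G : Fin J → Fin K → Bool) (j : Fin J) : Finset (Fin K) :=
  Finset.univ.filter (fun k => G j k = true)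

/-- The set of latent variables connected to some observed variable in `S`. -/
def coS {J K : ℕ} (G : Fin J → Fin K → Bool) (S : Finset (Fin J)) : Finset (Fin K) :=
  S.biUnion (co G)

/-- `θ j` depends only on the latent coordinates in `co G j`. -/
def DependsOnlyOnCo {J K V H : ℕ} (G : Fin J → Fin K → Bool)
    (θ : Fin J → (Fin K → Fin H) → Fin V → ℝ) : Prop :=
  ∀ (j : Fin J) (a a' : Fin K → Fin H), (∀ k ∈ co G j, a k = a' k) → θ j a = θ j a'

/-- Every `θ j (· | a)` is a probability vector on `{0,…,V-1}`. -/
def IsCPT {J K V H : ℕ} (θ : Fin J → (Fin K → Fin H) → Fin V → ℝ) : Prop :=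
  ∀ j a, (∀ v, 0 ≤ θ j a v) ∧ (∑ v, θ j a v) = 1

/-- `ν` is a probability mass function on `{0,…,H-1}^K`. -/
def IsPMF {K H : ℕ} (ν : (Fin K → Fin H) → ℝ) : Prop :=
  (∀ a, 0 ≤ ν a) ∧ (∑ a, ν a) = 1

/-- Induced joint pmf of the observed vector `Y`. -/
noncomputable def jointP {J K V H : ℕ} (ν : (Fin K → Fin H) → ℝ)
    (θ : Fin J → (Fin K → Fin H) → Fin V → ℝ) (y : Fin J → Fin V) : ℝ :=
  ∑ a : Fin K → Fin H, ν a * ∏ j, θ j a (y j)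

/-- Extend a latent configuration on `S` to all of `[K]`, filling in `0` elsewhere. -/
def extendA {K H : ℕ} [NeZero H] (S : Finset (Fin K)) (a : {k // k ∈ S} → Fin H) :
    Fin K → Fin H :=
  fun k => if h : k ∈ S then a ⟨k, h⟩ else 0

/-- Conditional probability table `P(Y_M | A_S)`. -/
noncomputable def cpt {J K V H : ℕ} [NeZero H]
    (θ : Fin J → (Fin K → Fin H) → Fin V → ℝ)
    (M : Finset (Fin J)) (S : Finset (Fin K)) :
    Matrix ({j // j ∈ M} → Fin V) ({k // k ∈ S} → Fin H) ℝ :=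
  Matrix.of fun y a => ∏ j : {j // j ∈ M}, θ j.1 (extendA S a) (y j)

/-- Unfolded tensor `[T]_{S₁,S₂}`: the matrix of joint marginal probabilities of
`Y_{S₁}` and `Y_{S₂}`. -/
noncomputable def unfoldT {J K V H : ℕ} (ν : (Fin K → Fin H) → ℝ)
    (θ : Fin J → (Fin K → Fin H) → Fin V → ℝ) (S₁ S₂ : Finset (Fin J)) :
    Matrix ({j // j ∈ S₁} → Fin V) ({j // j ∈ S₂} → Fin V) ℝ :=
  Matrix.of fun r c => ∑ y : Fin J → Fin V,
    if (∀ j : {j // j ∈ S₁}, y j.1 = r j) ∧ (∀ j : {j // j ∈ S₂}, y j.1 = c j)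
      then jointP ν θ y else 0

/-- `[T]_{S,:} = [T]_{S, [J]∖S}`. -/
noncomputable def unfoldRow {J K V H : ℕ} (ν : (Fin K → Fin H) → ℝ)
    (θ : Fin J → (Fin K → Fin H) → Fin V → ℝ) (S : Finset (Fin J)) :
    Matrix ({j // j ∈ S} → Fin V) ({j // j ∈ Sᶜ} → Fin V) ℝ :=
  unfoldT ν θ S Sᶜ

/-- Marginal pmf of `Y_S`. -/
noncomputable def marginalP {J K V H : ℕ} (ν : (Fin K → Fin H) → ℝ)
    (θ : Fin J → (Fin K → Fin H) → Fin V → ℝ) (S : Finset (Fin J))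
    (r : {j // j ∈ S} → Fin V) : ℝ :=
  ∑ y : Fin J → Fin V, if ∀ j : {j // j ∈ S}, y j.1 = r j then jointP ν θ y else 0

/-- Assumption 1: single-parent CPTs have full column rank `H`. -/
def Assumption1 {J K V H : ℕ} [NeZero H] (G : Fin J → Fin K → Bool)
    (θ : Fin J → (Fin K → Fin H) → Fin V → ℝ) : Prop :=
  ∀ j : Fin J, (co G j).card = 1 → (cpt θ {j} (co G j)).rank = H

/-- Assumption 2: each connected latent variable makes a difference. -/
def Assumption2 {J K V H : ℕ} (G : Fin J → Fin K → Bool)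
    (θ : Fin J → (Fin K → Fin H) → Fin V → ℝ) : Prop :=
  ∀ j : Fin J, ∀ k ∈ co G j, ∃ a : Fin K → Fin H, ∃ h h' : Fin H,
    θ j (Function.update a k h) ≠ θ j (Function.update a k h')

/-- Pure-child graph condition: every observed variable has a parent and every
latent variable has at least two pure children. -/
def PureChild {J K : ℕ} (G : Fin J → Fin K → Bool) : Prop :=
  (∀ j, (co G j).Nonempty) ∧
    ∀ k : Fin K,
      2 ≤ (Finset.univ.filter (fun j => co G j = ({k} : Finset (Fin K)))).card

/-- Pairwise rank condition (paper's Lemma 3 conclusion, holding generically). -/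
def PairwiseRank {J K V H : ℕ} [NeZero H] (G : Fin J → Fin K → Bool)
    (θ : Fin J → (Fin K → Fin H) → Fin V → ℝ) : Prop :=
  ∀ j₁ j₂ : Fin J, j₁ ≠ j₂ → (¬ ∃ k : Fin K, co G j₁ ∪ co G j₂ = {k}) →
    H < (cpt θ ({j₁, j₂} : Finset (Fin J)) (co G j₁ ∪ co G j₂)).rank

/-- Khatri–Rao (column-wise Kronecker) product. -/
noncomputable def khatriRao {I J R : ℕ} (A : Matrix (Fin I) (Fin R) ℝ)
    (B : Matrix (Fin J) (Fin R) ℝ) : Matrix (Fin I × Fin J) (Fin R) ℝ :=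
  Matrix.of fun p r => A p.1 r * B p.2 r

/-- Kruskal rank: the largest `r` such that every `r` columns are linearly
independent. -/
noncomputable def krank {m : Type*} {R : ℕ} (A : Matrix m (Fin R) ℝ) : ℕ :=
  @Nat.findGreatest
    (fun r => ∀ s : Finset (Fin R), s.card = r →
      LinearIndependent ℝ (fun j : {x // x ∈ s} => (fun i => A i j.1)))
    (Classical.decPred _) R

/-- The joint probability table `P(A_S, A)`. -/
noncomputable def jointLatent {K H : ℕ} (ν : (Fin K → Fin H) → ℝ) (S : Finset (Fin K)) :
    Matrix ({k // k ∈ S} → Fin H) (Fin K → Fin H) ℝ :=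
  Matrix.of fun a b => if ∀ k : {k // k ∈ S}, b k.1 = a k then ν b else 0

/-- A family of `m` pairwise disjoint subsets of observed variables witnessing the
rank certificate of Proposition 1. -/
def GoodFamily {J K V H : ℕ} [NeZero H] (ν : (Fin K → Fin H) → ℝ)
    (θ : Fin J → (Fin K → Fin H) → Fin V → ℝ) (m : ℕ) : Prop :=
  ∃ S : Fin m → Finset (Fin J),
    (∀ l l', l ≠ l' → Disjoint (S l) (S l')) ∧
    (∀ l, 2 ≤ (S l).card) ∧
    (∀ l, ∀ j₁ ∈ S l, ∀ j₂ ∈ S l, j₁ ≠ j₂ →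
      (unfoldRow ν θ ({j₁, j₂} : Finset (Fin J))).rank ≤ H) ∧
    (∀ l l', l ≠ l' → ∀ j₁ ∈ S l, ∀ j₂ ∈ S l',
      H < (unfoldRow ν θ ({j₁, j₂} : Finset (Fin J))).rank)

/-- Index type for the free parameters of the pair `(θ_{j₁}, θ_{j₂})`:
for each `j ∈ {j₁,j₂}`, each latent configuration on `co G j`, and each
`v ∈ {0,…,V-2}` one real parameter (the `v = V-1` entry is determined by
normalization). -/
abbrev ParamIx (V H : ℕ) {J K : ℕ} (G : Fin J → Fin K → Bool) (j₁ j₂ : Fin J) : Type :=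
  Σ j : {j // j ∈ ({j₁, j₂} : Finset (Fin J))},
    (({k // k ∈ co G j.1} → Fin H) × Fin (V - 1))

/-- The conditional probability tables determined by a parameter point
`x : ℝ^D`. -/
noncomputable def thetaOf {J K : ℕ} (V H : ℕ) [NeZero H] [NeZero V]
    (G : Fin J → Fin K → Bool) (j₁ j₂ : Fin J)
    (x : ParamIx V H G j₁ j₂ → ℝ) :
    Fin J → (Fin K → Fin H) → Fin V → ℝ :=
  fun j a v =>
    if hj : j ∈ ({j₁, j₂} : Finset (Fin J)) then
      if hv : v.1 < V - 1 then
        x ⟨⟨j, hj⟩, (fun k => a k.1, ⟨v.1, hv⟩)⟩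
      else 1 - ∑ v' : Fin (V - 1), x ⟨⟨j, hj⟩, (fun k => a k.1, v')⟩
    else if v = 0 then 1 else 0

/-!
If a nontrivial combination `∑_{r ∈ W} c_r a_r ⊗ b_r` of Khatri–Rao columns vanishes, with all
`c_r ≠ 0`, then `A_W diag(c) B_Wᵀ = 0`, so `rank A_W + rank B_W ≤ |W|` by Sylvester's inequality.
Since any `min (krank A) |W|` columns of `A_W` are independent, and likewise for `B`, this forces
`krank A + krank B ≤ |W|` as soon as both Kruskal ranks are positive. Hence every set of
fewer than `krank A + krank B` columns of `A ⊙ B` is independent. A zero column of `A` or `B`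
yields a zero column of `A ⊙ B`.
-/

section Krank

variable {m : Type*} {R : ℕ} (A : Matrix m (Fin R) ℝ)

lemma krank_le : krank A ≤ R :=
  @Nat.findGreatest_le _ (Classical.decPred _) R

lemma le_krank {n : ℕ} (hn : n ≤ R)
    (h : ∀ s : Finset (Fin R), s.card = n → LinearIndepOn ℝ A.col (s : Set (Fin R))) :
    n ≤ krank A :=
  @Nat.le_findGreatest _ _ (Classical.decPred _) _ hn h

lemma linearIndepOn_col_of_card_le_krank {s : Finset (Fin R)} (hs : s.card ≤ krank A) :
    LinearIndepOn ℝ A.col (s : Set (Fin R)) := by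
  obtain ⟨t, hst, -, ht⟩ := Finset.exists_subsuperset_card_eq (Finset.subset_univ s) hs
    (by simpa using krank_le A)
  have hkrank : ∀ t : Finset (Fin R), t.card = krank A →
      LinearIndepOn ℝ A.col (t : Set (Fin R)) :=
    @Nat.findGreatest_spec 0 (fun n => ∀ t : Finset (Fin R), t.card = n →
      LinearIndepOn ℝ A.col (t : Set (Fin R))) (Classical.decPred _) R (Nat.zero_le R)
      fun t ht => by simp [Finset.card_eq_zero.mp ht]
  exact (hkrank t ht).mono (Finset.coe_subset.mpr hst)

lemma krank_eq_zero_iff : krank A = 0 ↔ R = 0 ∨ ∃ r, A.col r = 0 := by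
  refine ⟨fun h => ?_, ?_⟩
  · by_contra! hcol
    have : 1 ≤ krank A := le_krank A (Nat.one_le_iff_ne_zero.mpr hcol.1) fun s hs => by
      obtain ⟨r, rfl⟩ := Finset.card_eq_one.mp hs
      simpa using hcol.2 r
    omega
  · rintro (hR | ⟨r, hr⟩)
    · exact Nat.eq_zero_of_le_zero (hR ▸ krank_le A)
    · by_contra hpos
      exact (linearIndepOn_col_of_card_le_krank A (s := {r}) (by simp; omega)).ne_zero
        (by simp) hr

lemma min_krank_card_le_rank_submatrix [Fintype m] (s : Finset (Fin R)) :
    min (krank A) s.card ≤ (A.submatrix id ((↑) : s → Fin R)).rank := by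
  obtain ⟨t, hts, ht⟩ := Finset.exists_subset_card_eq (min_le_right (krank A) s.card)
  have hli : LinearIndependent ℝ (A.submatrix id ((↑) : t → Fin R))ᵀ.row :=
    linearIndepOn_col_of_card_le_krank A (ht ▸ min_le_left _ _)
  calc min (krank A) s.card = t.card := ht.symm
    _ = (A.submatrix id ((↑) : t → Fin R)).rank := by
      rw [← rank_transpose, hli.rank_matrix, Fintype.card_coe]
    _ = ((A.submatrix id ((↑) : s → Fin R)).submatrix id (Set.inclusion hts)).rank := rfl
    _ ≤ _ := rank_submatrix_le _ _ _

end Krank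

section KhatriRao

variable {I J R : ℕ} (A : Matrix (Fin I) (Fin R) ℝ) (B : Matrix (Fin J) (Fin R) ℝ)

lemma sum_smul_col_khatriRao_apply (W : Finset (Fin R)) (c : Fin R → ℝ) (i : Fin I) (j : Fin J) :
    (∑ r ∈ W, c r • (khatriRao A B).col r) (i, j) =
      (A.submatrix id ((↑) : W → Fin R) * diagonal (fun r : W => c r) *
        (B.submatrix id ((↑) : W → Fin R))ᵀ) i j := by
  rw [mul_apply, Finset.sum_apply, ← Finset.sum_coe_sort W]
  refine Finset.sum_congr rfl fun r _ => ?_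
  simp only [Pi.smul_apply, mul_diagonal, khatriRao, col_apply, of_apply, submatrix_apply,
    transpose_apply, id_eq, smul_eq_mul]
  ring

lemma krank_add_krank_le_card_of_sum_smul_col_khatriRao_eq_zero
    (hA : 1 ≤ krank A) (hB : 1 ≤ krank B) {W : Finset (Fin R)} (hW : W.Nonempty)
    {c : Fin R → ℝ} (hc : ∀ r ∈ W, c r ≠ 0)
    (h : ∑ r ∈ W, c r • (khatriRao A B).col r = 0) :
    krank A + krank B ≤ W.card := by
  have hA' := min_krank_card_le_rank_submatrix A W
  have hB' := min_krank_card_le_rank_submatrix B W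
  have hW' := hW.card_pos
  set A' := A.submatrix id ((↑) : W → Fin R)
  set B' := B.submatrix id ((↑) : W → Fin R)
  have hmul : A' * diagonal (fun r : W => c r) * B'ᵀ = 0 := by
    ext i j
    rw [← sum_smul_col_khatriRao_apply, h]
    rfl
  have hdiag : (A' * diagonal (fun r : W => c r)).rank = A'.rank :=
    rank_mul_eq_left_of_isUnit_det _ _ <| by
      simpa [isUnit_iff_ne_zero, Finset.prod_ne_zero_iff] using hc
  have hrank := rank_add_rank_le_card_of_mul_eq_zero hmul
  rw [hdiag, rank_transpose, Fintype.card_coe] at hrank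
  omega

end KhatriRao

/-- Lemma 4; Stegeman–Sidiropoulos: Kruskal-rank bounds for the
Khatri–Rao product. -/
theorem krank_khatriRao
    {I J R : ℕ} (A : Matrix (Fin I) (Fin R) ℝ) (B : Matrix (Fin J) (Fin R) ℝ) :
    ((krank A = 0 ∨ krank B = 0) → krank (khatriRao A B) = 0) ∧
    (1 ≤ krank A → 1 ≤ krank B →
      min (krank A + krank B - 1) R ≤ krank (khatriRao A B)) := by
  constructor
  · intro h
    rw [krank_eq_zero_iff]
    rcases h with h | h <;> rcases (krank_eq_zero_iff _).mp h with hR | ⟨r, hr⟩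
    · exact .inl hR
    · exact .inr ⟨r, funext fun p => by simp [khatriRao, show A p.1 r = 0 from congrFun hr p.1]⟩
    · exact .inl hR
    · exact .inr ⟨r, funext fun p => by simp [khatriRao, show B p.2 r = 0 from congrFun hr p.2]⟩
  · intro hA hB
    refine le_krank _ (min_le_right _ _) fun s hs => linearIndepOn_finset_iff.mpr fun c hc => ?_
    by_contra! ⟨r, hrs, hr⟩
    have hsupp := krank_add_krank_le_card_of_sum_smul_col_khatriRao_eq_zero A B hA hB
      (W := s.filter (c · ≠ 0)) ⟨r, by simp [hrs, hr]⟩ (fun r hr => (Finset.mem_filter.mp hr).2)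
      (by rwa [Finset.sum_filter_of_ne fun r _ => left_ne_zero_of_smul])
    have := Finset.card_filter_le s (c · ≠ 0)
    omega

end LBGM
end

section
/- In the discrete latent bipartite graphical model, let M ⊆ [J] and suppose there exist a subset S ⊆ M with |S| = K and an enumeration S = {s_1,…,s_K} such that, for each k ∈ [K], co(s_k) = {k} and the V × H matrix P(Y_{s_k} | A_k) (with entries θ_{s_k}(v|h)) has full column rank H. Then the V^{|M|} × H^K conditional probability table P(Y_M | A_{[K]}) has full column rank H^K. -/
/-!
Each single-parent table `P(Y_{s_k} | A_k)` has a left inverse `C_k`. Apply the functional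
`L(a, y) = ∏_k C_k(a_k, y_{s_k})` to a column of `P(Y_M | A_{[K]})`: the column is a product
distribution over the observed coordinates, so the sum factorises; every coordinate outside
`{s_1, …, s_K}` contributes its total mass `1`, and the coordinate `s_k` contributes
`(C_k P(Y_{s_k} | A_k))(a_k, a'_k) = δ(a_k, a'_k)`. Hence `L · P(Y_M | A_{[K]}) = 1`.
-/

open Matrix MeasureTheory

open Finset

namespace Matrix

variable {m n 𝕜 : Type*} [Fintype m] [Fintype n] [DecidableEq n] [Field 𝕜]

theorem rank_eq_card_of_mul_eq_one {A : Matrix m n 𝕜} {C : Matrix n m 𝕜} (h : C * A = 1) :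
    A.rank = Fintype.card n :=
  le_antisymm A.rank_le_card_width <| by simpa [h, rank_one] using rank_mul_le_right C A

theorem exists_mul_eq_one_of_rank_eq_card {A : Matrix m n 𝕜} (h : A.rank = Fintype.card n) :
    ∃ C : Matrix n m 𝕜, C * A = 1 := by
  have hsurj : Function.Surjective Aᵀ.mulVec := by
    have hrange : LinearMap.range Aᵀ.mulVecLin = ⊤ :=
      Submodule.eq_top_of_finrank_eq <| by
        rw [Module.finrank_fintype_fun_eq_card, ← h, ← rank_transpose]; rfl
    exact LinearMap.range_eq_top.mp hrange
  obtain ⟨B, hB⟩ := mulVec_surjective_iff_exists_right_inverse.mp hsurj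
  exact ⟨Bᵀ, by rw [← transpose_transpose A, ← transpose_mul, hB, transpose_one]⟩

theorem prod_one_apply {κ β R : Type*} [Fintype κ] [DecidableEq κ] [DecidableEq β]
    [CommSemiring R] (a a' : κ → β) :
    ∏ k, (1 : Matrix β β R) (a k) (a' k) = (1 : Matrix (κ → β) (κ → β) R) a a' := by
  simp [one_apply, Fintype.prod_boole, funext_iff]

end Matrix

theorem Fintype.sum_prod_comp_mul_prod {ι κ α R : Type*} [Fintype ι] [DecidableEq ι]
    [Fintype κ] [Fintype α] [CommSemiring R] {s : κ → ι} (hs : Function.Injective s)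
    (ℓ : κ → α → R) {p : ι → α → R} (hp : ∀ i, ∑ v, p i v = 1) :
    ∑ y : ι → α, (∏ k, ℓ k (y (s k))) * ∏ i, p i (y i) = ∏ k, ∑ v, ℓ k v * p (s k) v := by
  have hfiber : ∀ i, ∑ v, (∏ k ∈ univ with s k = i, ℓ k v) * p i v =
      ∏ k ∈ univ with s k = i, ∑ v, ℓ k v * p (s k) v := by
    intro i
    rcases (univ.filter (s · = i)).eq_empty_or_nonempty with hempty | ⟨k, hk⟩
    · simp [hempty, hp]
    · obtain rfl : s k = i := (mem_filter.mp hk).2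
      have : univ.filter (s · = s k) = {k} := by ext; simp [hs.eq_iff]
      simp [this]
  calc ∑ y : ι → α, (∏ k, ℓ k (y (s k))) * ∏ i, p i (y i)
      = ∑ y : ι → α, ∏ i, (∏ k ∈ univ with s k = i, ℓ k (y i)) * p i (y i) := by
        refine Finset.sum_congr rfl fun y _ => ?_
        rw [Finset.prod_mul_distrib, ← Finset.prod_fiberwise univ s]
        congr 1
        exact Finset.prod_congr rfl fun i _ =>
          Finset.prod_congr rfl fun k hk => by rw [(mem_filter.mp hk).2]
    _ = ∏ i, ∑ v, (∏ k ∈ univ with s k = i, ℓ k v) * p i v :=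
      (Fintype.prod_sum fun i v => (∏ k ∈ univ with s k = i, ℓ k v) * p i v).symm
    _ = ∏ i, ∏ k ∈ univ with s k = i, ∑ v, ℓ k v * p (s k) v :=
      Finset.prod_congr rfl fun i _ => hfiber i
    _ = ∏ k, ∑ v, ℓ k v * p (s k) v := Finset.prod_fiberwise univ s _

namespace LBGM

section

variable {J K V H : ℕ} {G : Fin J → Fin K → Bool} {θ : Fin J → (Fin K → Fin H) → Fin V → ℝ}

theorem DependsOnlyOnCo.apply_eq_of_co_eq_singleton (hdep : DependsOnlyOnCo G θ) {j : Fin J}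
    {k : Fin K} (hj : co G j = {k}) (a : Fin K → Fin H) : θ j a = θ j (fun _ => a k) :=
  hdep j a _ fun k' hk' => by rw [hj, mem_singleton] at hk'; rw [hk']

/-- `P(Y_j | A_k)` as a `V × H` matrix, for a child `j` whose only parent is `k`. -/
def pureChildCPT (θ : Fin J → (Fin K → Fin H) → Fin V → ℝ) (j : Fin J) :
    Matrix (Fin V) (Fin H) ℝ :=
  of fun v h => θ j (fun _ => h) v

theorem rank_pureChildCPT [NeZero H] (hdep : DependsOnlyOnCo G θ) {j : Fin J} {k : Fin K}
    (hj : co G j = {k}) : (pureChildCPT θ j).rank = (cpt θ {j} (co G j)).rank := by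
  have hsub : cpt θ {j} {k} =
      (pureChildCPT θ j).submatrix (Equiv.funUnique _ _) (Equiv.funUnique _ _) := by
    ext y a
    simp only [cpt, pureChildCPT, extendA, of_apply, submatrix_apply, Equiv.funUnique_apply,
      univ_unique, prod_singleton, default_singleton, mem_singleton, ↓reduceDIte,
      hdep.apply_eq_of_co_eq_singleton hj]
    rfl
  rw [hj, hsub, rank_submatrix]

end

theorem cpt_full_column_rank_general
    {J K V H : ℕ} [NeZero H]
    (G : Fin J → Fin K → Bool)
    (θ : Fin J → (Fin K → Fin H) → Fin V → ℝ)
    (hdep : DependsOnlyOnCo G θ) (hcpt : IsCPT θ)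
    (M : Finset (Fin J)) (s : Fin K → Fin J)
    (hmem : ∀ k, s k ∈ M)
    (hco : ∀ k, co G (s k) = {k})
    (hrk : ∀ k, (cpt θ {s k} (co G (s k))).rank = H) :
    (cpt θ M (Finset.univ : Finset (Fin K))).rank = H ^ K := by
  have hs : Function.Injective s := fun k k' h =>
    singleton_inj.mp <| by rw [← hco k, ← hco k', h]
  choose C hC using fun k => Matrix.exists_mul_eq_one_of_rank_eq_card
    (A := pureChildCPT θ (s k)) (by rw [rank_pureChildCPT hdep (hco k), hrk k, Fintype.card_fin])
  let ι : {k // k ∈ univ} → {j // j ∈ M} := fun k => ⟨s k.1, hmem k.1⟩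
  have hι : Function.Injective ι := fun k k' h => Subtype.ext (hs (congrArg Subtype.val h))
  let L : Matrix ({k // k ∈ univ} → Fin H) ({j // j ∈ M} → Fin V) ℝ :=
    of fun a y => ∏ k, C k.1 (a k) (y (ι k))
  have hLP : L * cpt θ M univ = 1 := by
    ext a a'
    calc (L * cpt θ M univ) a a'
        = ∑ y : {j // j ∈ M} → Fin V,
            (∏ k, C k.1 (a k) (y (ι k))) * ∏ j, θ j.1 (extendA univ a') (y j) := rfl
      _ = ∏ k : {k // k ∈ univ}, ∑ v, C k.1 (a k) v * θ (s k) (extendA univ a') v :=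
        Fintype.sum_prod_comp_mul_prod hι _ fun j => (hcpt j _).2
      _ = ∏ k : {k // k ∈ univ}, (C k.1 * pureChildCPT θ (s k)) (a k) (a' k) := by
        simp [mul_apply, pureChildCPT, hdep.apply_eq_of_co_eq_singleton (hco _), extendA]
      _ = (1 : Matrix ({k // k ∈ univ} → Fin H) _ ℝ) a a' := by
        simp only [hC]; exact Matrix.prod_one_apply a a'
  simpa using Matrix.rank_eq_card_of_mul_eq_one hLP

/-- if `M` contains a system of pure children of all `K` latent
variables whose CPTs have full column rank `H`, then `P(Y_M | A_{[K]})` has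
full column rank `H^K`. -/
theorem cpt_full_column_rank
    {J K V H : ℕ} [NeZero H] (hH : 2 ≤ H) (hVH : H ≤ V)
    (G : Fin J → Fin K → Bool)
    (θ : Fin J → (Fin K → Fin H) → Fin V → ℝ)
    (hdep : DependsOnlyOnCo G θ) (hcpt : IsCPT θ)
    (M : Finset (Fin J)) (s : Fin K → Fin J)
    (hinj : Function.Injective s) (hmem : ∀ k, s k ∈ M)
    (hco : ∀ k, co G (s k) = {k})
    (hrk : ∀ k, (cpt θ {s k} (co G (s k))).rank = H) :
    (cpt θ M (Finset.univ : Finset (Fin K))).rank = H ^ K :=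
  cpt_full_column_rank_general G θ hdep hcpt M s hmem hco hrk

end LBGM
end
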